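/- arXiv:1809.02015 — 2 statements merged into one kernel-verified Lean document; each statement's English description precedes it below -/
import Mathlib

section
/- Let 0 ≤ β < 1/2 and γ > 0 with γ + β > 1/2. Suppose v : (0,1) → ℝ is measurable and M ≥ 0 satisfies ∫_t^1 (s−t)^{−2β} |v(s)|² ds ≤ M² for every t ∈ (0,1). Then for every t ∈ (0,1), |(I_{1-}^γ v)(t)| ≤ (Γ(γ)·√(2γ+2β−1))^{-1} · (1−t)^{γ+β−1/2} · M; in particular (I_{1-}^γ v)(t) → 0 as t → 1−. -/
/-!
Write `|(s-t)^(γ-1) v(s)| = (s-t)^(γ+β-1) · (s-t)^(-β) |v(s)|` and apply Cauchy–Schwarz on `(t,1)`.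
The first factor has squared `L²` norm `(1-t)^(2γ+2β-1) / (2γ+2β-1)`, finite exactly because
`γ + β > 1/2`; the second has squared `L²` norm at most `M²`. The resulting bound tends to `0` as
`t → 1⁻` because its exponent `γ + β - 1/2` is positive.
-/

open MeasureTheory

/-- Right Riemann–Liouville fractional integral on `(0,1)`:
`(I_{1-}^γ v)(t) = (1/Γ(γ)) ∫_t^1 (s-t)^(γ-1) v(s) ds`. -/
noncomputable def rightFracInt (γ : ℝ) (v : ℝ → ℝ) (t : ℝ) : ℝ :=
  (Real.Gamma γ)⁻¹ * ∫ s in t..(1 : ℝ), (s - t) ^ (γ - 1) * v s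

open Real Set Filter

theorem memLp_two_sqrt {α : Type*} [MeasurableSpace α] {μ : Measure α} {f : α → ℝ}
    (hf0 : 0 ≤ᵐ[μ] f) (hf : Integrable f μ) : MemLp (fun a => √(f a)) 2 μ := by
  rw [memLp_two_iff_integrable_sq
    (continuous_sqrt.comp_aestronglyMeasurable hf.aestronglyMeasurable)]
  refine hf.congr ?_
  filter_upwards [hf0] with a ha using (sq_sqrt ha).symm

theorem integral_sqrt_mul_sqrt_le {α : Type*} [MeasurableSpace α] {μ : Measure α} {u w : α → ℝ}
    (hu0 : 0 ≤ᵐ[μ] u) (hw0 : 0 ≤ᵐ[μ] w) (hu : Integrable u μ) (hw : Integrable w μ) :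
    ∫ a, √(u a) * √(w a) ∂μ ≤ √(∫ a, u a ∂μ) * √(∫ a, w a ∂μ) := by
  have integral_sq_sqrt : ∀ {f : α → ℝ}, 0 ≤ᵐ[μ] f → ∫ a, √(f a) ^ (2 : ℝ) ∂μ = ∫ a, f a ∂μ :=
    fun hf0 => integral_congr_ae <| by
      filter_upwards [hf0] with a ha
      rw [rpow_two, sq_sqrt ha]
  have := integral_mul_le_Lp_mul_Lq_of_nonneg HolderConjugate.two_two
    (.of_forall fun a => sqrt_nonneg (u a)) (.of_forall fun a => sqrt_nonneg (w a))
    (by simpa only [ENNReal.ofReal_ofNat] using memLp_two_sqrt hu0 hu)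
    (by simpa only [ENNReal.ofReal_ofNat] using memLp_two_sqrt hw0 hw)
  rwa [integral_sq_sqrt hu0, integral_sq_sqrt hw0, ← sqrt_eq_rpow, ← sqrt_eq_rpow] at this

theorem integrableOn_Ioo_sub_rpow {t b r : ℝ} (hr : -1 < r) :
    IntegrableOn (fun s => (s - t) ^ r) (Ioo t b) := by
  have h := (intervalIntegral.intervalIntegrable_rpow' hr (a := t - t) (b := b - t)).comp_sub_right t
  rw [sub_add_cancel, sub_add_cancel] at h
  exact h.def'.mono_set (Ioo_subset_Ioc_self.trans Ioc_subset_uIoc)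

theorem integral_sub_rpow {t b r : ℝ} (hr : -1 < r) :
    ∫ s in t..b, (s - t) ^ r = (b - t) ^ (r + 1) / (r + 1) := by
  rw [intervalIntegral.integral_comp_sub_right (fun x => x ^ r), sub_self,
    integral_rpow (Or.inl hr), zero_rpow (by linarith), sub_zero]

theorem sqrt_mul_sqrt_sub_rpow {s t γ β x : ℝ} (hts : t < s) :
    √((s - t) ^ (2 * γ + 2 * β - 2)) * √((s - t) ^ (-(2 * β)) * x ^ 2) = |(s - t) ^ (γ - 1) * x| := by
  have hst : 0 < s - t := sub_pos.2 hts
  have hsq : (s - t) ^ (2 * γ + 2 * β - 2) * ((s - t) ^ (-(2 * β)) * x ^ 2) =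
      ((s - t) ^ (γ - 1) * x) ^ 2 := by
    rw [← mul_assoc, ← rpow_add hst, mul_pow, ← rpow_two ((s - t) ^ (γ - 1)), ← rpow_mul hst.le]
    ring_nf
  rw [← sqrt_mul (rpow_nonneg hst.le _), hsq, sqrt_sq_eq_abs]

theorem abs_integral_sub_rpow_mul_le {t b γ β : ℝ} (htb : t < b) (hγβ : 1 / 2 < γ + β) {v : ℝ → ℝ}
    (hw : IntegrableOn (fun s => (s - t) ^ (-(2 * β)) * v s ^ 2) (Ioo t b)) :
    |∫ s in t..b, (s - t) ^ (γ - 1) * v s| ≤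
      (b - t) ^ (γ + β - 1 / 2) / √(2 * γ + 2 * β - 1) *
        √(∫ s in t..b, (s - t) ^ (-(2 * β)) * v s ^ 2) := by
  have hr : -1 < 2 * γ + 2 * β - 2 := by linarith
  have hbt : 0 ≤ b - t := by linarith
  simp only [intervalIntegral.integral_of_le htb.le, integral_Ioc_eq_integral_Ioo]
  calc |∫ s in Ioo t b, (s - t) ^ (γ - 1) * v s|
      ≤ ∫ s in Ioo t b, |(s - t) ^ (γ - 1) * v s| := abs_integral_le_integral_abs
    _ = ∫ s in Ioo t b, √((s - t) ^ (2 * γ + 2 * β - 2)) * √((s - t) ^ (-(2 * β)) * v s ^ 2) :=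
        setIntegral_congr_fun measurableSet_Ioo fun s hs => (sqrt_mul_sqrt_sub_rpow hs.1).symm
    _ ≤ √(∫ s in Ioo t b, (s - t) ^ (2 * γ + 2 * β - 2)) *
          √(∫ s in Ioo t b, (s - t) ^ (-(2 * β)) * v s ^ 2) := by
        have hpos : ∀ᵐ s ∂volume.restrict (Ioo t b), 0 < s - t := by
          filter_upwards [ae_restrict_mem measurableSet_Ioo] with s hs using sub_pos.2 hs.1
        refine integral_sqrt_mul_sqrt_le ?_ ?_ (integrableOn_Ioo_sub_rpow hr) hw
        · filter_upwards [hpos] with s hs using rpow_nonneg hs.le _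
        · filter_upwards [hpos] with s hs using mul_nonneg (rpow_nonneg hs.le _) (sq_nonneg _)
    _ = _ := by
        rw [← integral_Ioc_eq_integral_Ioo, ← intervalIntegral.integral_of_le htb.le,
          integral_sub_rpow hr, show 2 * γ + 2 * β - 2 + 1 = 2 * γ + 2 * β - 1 by ring,
          sqrt_div' _ (by linarith), sqrt_eq_rpow, ← rpow_mul hbt,
          show (2 * γ + 2 * β - 1) * (1 / 2) = γ + β - 1 / 2 by ring]

theorem abs_rightFracInt_le {γ β M t : ℝ} (hγ : 0 < γ) (hγβ : 1 / 2 < γ + β) {v : ℝ → ℝ}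
    (ht : t < 1) (hw : IntegrableOn (fun s => (s - t) ^ (-(2 * β)) * v s ^ 2) (Ioo t 1))
    (hM : 0 ≤ M) (hwM : ∫ s in t..(1 : ℝ), (s - t) ^ (-(2 * β)) * v s ^ 2 ≤ M ^ 2) :
    |rightFracInt γ v t| ≤ (Gamma γ * √(2 * γ + 2 * β - 1))⁻¹ * (1 - t) ^ (γ + β - 1 / 2) * M := by
  have hΓ : 0 < (Gamma γ)⁻¹ := inv_pos.2 (Gamma_pos_of_pos hγ)
  rw [rightFracInt, abs_mul, abs_of_pos hΓ]
  calc (Gamma γ)⁻¹ * |∫ s in t..1, (s - t) ^ (γ - 1) * v s|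
      ≤ (Gamma γ)⁻¹ * ((1 - t) ^ (γ + β - 1 / 2) / √(2 * γ + 2 * β - 1) *
          √(∫ s in t..1, (s - t) ^ (-(2 * β)) * v s ^ 2)) := by
        gcongr
        exact abs_integral_sub_rpow_mul_le ht hγβ hw
    _ ≤ (Gamma γ)⁻¹ * ((1 - t) ^ (γ + β - 1 / 2) / √(2 * γ + 2 * β - 1) * M) := by
        gcongr
        exact (sqrt_le_sqrt hwM).trans_eq (sqrt_sq hM)
    _ = _ := by ring

theorem stmt_4_general (β γ : ℝ) (hγ : 0 < γ)
    (hγβ : 1 / 2 < γ + β)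
    (v : ℝ → ℝ) (M : ℝ) (hM : 0 ≤ M)
    (hint : ∀ t ∈ Set.Ioo (0 : ℝ) 1,
      IntegrableOn (fun s => (s - t) ^ (-(2 * β)) * (v s) ^ 2) (Set.Ioo t 1) ∧
      (∫ s in t..(1 : ℝ), (s - t) ^ (-(2 * β)) * (v s) ^ 2) ≤ M ^ 2) :
    (∀ t ∈ Set.Ioo (0 : ℝ) 1,
      |rightFracInt γ v t| ≤
        (Real.Gamma γ * Real.sqrt (2 * γ + 2 * β - 1))⁻¹ * (1 - t) ^ (γ + β - 1 / 2) * M) ∧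
    Filter.Tendsto (rightFracInt γ v) (nhdsWithin 1 (Set.Iio 1)) (nhds 0) := by
  have bound : ∀ t ∈ Ioo (0 : ℝ) 1, |rightFracInt γ v t| ≤
      (Gamma γ * √(2 * γ + 2 * β - 1))⁻¹ * (1 - t) ^ (γ + β - 1 / 2) * M :=
    fun t ht => abs_rightFracInt_le hγ hγβ ht.2 (hint t ht).1 hM (hint t ht).2
  have hcont : Continuous fun t : ℝ =>
      (Gamma γ * √(2 * γ + 2 * β - 1))⁻¹ * (1 - t) ^ (γ + β - 1 / 2) * M :=
    (((continuous_const.sub continuous_id).rpow_const fun _ => Or.inr (by linarith)).const_mul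
      _).mul_const _
  have hlim := hcont.tendsto 1
  rw [sub_self, zero_rpow (by linarith), mul_zero, zero_mul] at hlim
  refine ⟨bound, squeeze_zero_norm' ?_ (hlim.mono_left nhdsWithin_le_nhds)⟩
  filter_upwards [Ioo_mem_nhdsLT (show (0 : ℝ) < 1 by norm_num)] with t ht using bound t ht

/-- Quantitative endpoint-vanishing estimate from the paper's Lemma A.4: if
`0 ≤ β < 1/2`, `γ > 0`, `γ + β > 1/2`, `v` is measurable and
`∫_t^1 (s-t)^(-2β) |v s|² ds ≤ M²` for every `t ∈ (0,1)`, then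
`|(I_{1-}^γ v)(t)| ≤ (Γ(γ)·√(2γ+2β-1))⁻¹ (1-t)^(γ+β-1/2) M` on `(0,1)`;
in particular `(I_{1-}^γ v)(t) → 0` as `t → 1⁻`. -/
theorem stmt_4 (β γ : ℝ) (hβ0 : 0 ≤ β) (hβ : β < 1 / 2) (hγ : 0 < γ)
    (hγβ : 1 / 2 < γ + β)
    (v : ℝ → ℝ) (hv : Measurable v) (M : ℝ) (hM : 0 ≤ M)
    (hint : ∀ t ∈ Set.Ioo (0 : ℝ) 1,
      IntegrableOn (fun s => (s - t) ^ (-(2 * β)) * (v s) ^ 2) (Set.Ioo t 1) ∧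
      (∫ s in t..(1 : ℝ), (s - t) ^ (-(2 * β)) * (v s) ^ 2) ≤ M ^ 2) :
    (∀ t ∈ Set.Ioo (0 : ℝ) 1,
      |rightFracInt γ v t| ≤
        (Real.Gamma γ * Real.sqrt (2 * γ + 2 * β - 1))⁻¹ * (1 - t) ^ (γ + β - 1 / 2) * M) ∧
    Filter.Tendsto (rightFracInt γ v) (nhdsWithin 1 (Set.Iio 1)) (nhds 0) :=
  stmt_4_general β γ hγ hγβ v M hM hint
end

section
/- Let 0 ≤ β < 1/2 < γ < 1 and let w : [0,1] → ℝ be continuous with finite Gagliardo H^γ(0,1) seminorm; set w̄ := ∫_0^1 w(t) dt. Then ∫_0^1 (w(t) − w(1))² (t^{−2β} + (1−t)^{−2β}) dt ≤ C ( ‖w − w̄‖²_{L²(0,1)} + ∫_0^1 ∫_0^1 |w(s)−w(t)|²/|s−t|^{1+2γ} ds dt ), where C depends only on β and γ. -/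
/-
The estimate is a Campanato–Morrey argument. For `x ∈ [0, 1]` let `I n ∋ x` be nested
subintervals of `[0, 1]` of length `2⁻ⁿ`. Writing the difference of the averages of `w` over `I n`
and `I (n + 1)` as an average over `I n × I (n + 1)` and applying Jensen, it is at most
`√(2J) · 2^(-n(γ - 1/2))`, where `J` is the Gagliardo energy. Since `γ > 1/2` these bounds are
summable, and the averages converge to `w x` by continuity, so `|w x - ⨍ w| ≲ √J` uniformly in `x`.
Hence `(w t - w 1)² ≲ J` for all `t`, and the weight `t^(-2β) + (1 - t)^(-2β)` is integrable
because `2β < 1`.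
-/

open MeasureTheory Set Filter Topology

lemma average_sub_average_eq_average_prod {α E : Type*} [MeasurableSpace α]
    [NormedAddCommGroup E] [NormedSpace ℝ E] {μ ν : Measure α} [IsFiniteMeasure μ]
    [IsFiniteMeasure ν] [NeZero μ] [NeZero ν] {f : α → E} (hfμ : Integrable f μ)
    (hfν : Integrable f ν) :
    (⨍ x, f x ∂μ) - ⨍ y, f y ∂ν = ⨍ p, (f p.1 - f p.2) ∂μ.prod ν := by
  have hμ : μ.real univ ≠ 0 := (measureReal_univ_pos (μ := μ)).ne'
  have hν : ν.real univ ≠ 0 := (measureReal_univ_pos (μ := ν)).ne'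
  rw [average_eq, average_eq, average_eq, integral_sub (hfμ.comp_fst ν) (hfν.comp_snd μ),
    integral_fun_fst, integral_fun_snd, ← univ_prod_univ, measureReal_prod_prod, smul_sub,
    smul_smul, smul_smul]
  congr 2 <;> field_simp

noncomputable def gagliardoIntegrand (γ : ℝ) (w : ℝ → ℝ) (p : ℝ × ℝ) : ℝ :=
  (w p.1 - w p.2) ^ 2 / |p.1 - p.2| ^ (1 + 2 * γ)

section Gagliardo

variable {γ : ℝ} {w : ℝ → ℝ}

lemma gagliardoIntegrand_nonneg (p : ℝ × ℝ) : 0 ≤ gagliardoIntegrand γ w p := by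
  unfold gagliardoIntegrand; positivity

lemma sq_sub_le_mul_gagliardoIntegrand (hγ : 0 ≤ 1 + 2 * γ) {s t D : ℝ} (hst : |s - t| ≤ D) :
    (w s - w t) ^ 2 ≤ D ^ (1 + 2 * γ) * gagliardoIntegrand γ w (s, t) := by
  rcases eq_or_ne s t with rfl | hne
  · simp [gagliardoIntegrand]
  have hpos : 0 < |s - t| ^ (1 + 2 * γ) := by
    have := abs_pos.mpr (sub_ne_zero.mpr hne); positivity
  calc (w s - w t) ^ 2 = |s - t| ^ (1 + 2 * γ) * gagliardoIntegrand γ w (s, t) := by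
        rw [gagliardoIntegrand, mul_div_cancel₀ _ hpos.ne']
    _ ≤ D ^ (1 + 2 * γ) * gagliardoIntegrand γ w (s, t) := by
        gcongr
        exact gagliardoIntegrand_nonneg _

lemma sq_setAverage_sub_setAverage_le {s t : Set ℝ} {D : ℝ} (hγ : 0 ≤ 1 + 2 * γ)
    (hs : MeasurableSet s) (ht : MeasurableSet t) (hs₀ : volume s ≠ 0) (hs_top : volume s ≠ ⊤)
    (ht₀ : volume t ≠ 0) (ht_top : volume t ≠ ⊤) (hws : IntegrableOn w s) (hwt : IntegrableOn w t)
    (hG : IntegrableOn (gagliardoIntegrand γ w) (s ×ˢ t))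
    (hdist : ∀ x ∈ s, ∀ y ∈ t, |x - y| ≤ D) :
    ((⨍ x in s, w x) - ⨍ y in t, w y) ^ 2 ≤
      D ^ (1 + 2 * γ) / (volume.real s * volume.real t) *
        ∫ p in s ×ˢ t, gagliardoIntegrand γ w p := by
  have : IsFiniteMeasure (volume.restrict s) := isFiniteMeasure_restrict.mpr hs_top
  have : IsFiniteMeasure (volume.restrict t) := isFiniteMeasure_restrict.mpr ht_top
  have : NeZero (volume.restrict s) := ⟨by simpa using hs₀⟩
  have : NeZero (volume.restrict t) := ⟨by simpa using ht₀⟩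
  have hρ : volume.restrict (s ×ˢ t) = (volume.restrict s).prod (volume.restrict t) := by
    rw [Measure.volume_eq_prod, Measure.prod_restrict]
  have : IsFiniteMeasure (volume.restrict (s ×ˢ t)) := by rw [hρ]; infer_instance
  have : NeZero (volume.restrict (s ×ˢ t)) := ⟨by
    rw [Ne, Measure.restrict_eq_zero, Measure.volume_eq_prod, Measure.prod_prod]
    exact mul_ne_zero hs₀ ht₀⟩
  have hdiff : Integrable (fun p : ℝ × ℝ => w p.1 - w p.2) (volume.restrict (s ×ˢ t)) := by
    rw [hρ]; exact (hws.comp_fst _).sub (hwt.comp_snd _)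
  have hbound : ∀ᵐ p ∂volume.restrict (s ×ˢ t),
      (w p.1 - w p.2) ^ 2 ≤ D ^ (1 + 2 * γ) * gagliardoIntegrand γ w p := by
    filter_upwards [ae_restrict_mem (hs.prod ht)] with p hp
    exact sq_sub_le_mul_gagliardoIntegrand hγ (hdist _ hp.1 _ hp.2)
  have hsq : Integrable (fun p : ℝ × ℝ => (w p.1 - w p.2) ^ 2) (volume.restrict (s ×ˢ t)) :=
    (hG.const_mul _).mono' (hdiff.aestronglyMeasurable.pow 2)
      (hbound.mono fun p hp => by rwa [Real.norm_of_nonneg (sq_nonneg _)])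
  calc ((⨍ x in s, w x) - ⨍ y in t, w y) ^ 2
      = (⨍ p in s ×ˢ t, (w p.1 - w p.2)) ^ 2 := by
        rw [hρ, average_sub_average_eq_average_prod hws hwt]
    _ ≤ ⨍ p in s ×ˢ t, (w p.1 - w p.2) ^ 2 :=
        (even_two.convexOn_pow).map_average_le (continuous_pow 2).continuousOn isClosed_univ
          (by simp) hdiff hsq
    _ ≤ D ^ (1 + 2 * γ) / (volume.real s * volume.real t) *
          ∫ p in s ×ˢ t, gagliardoIntegrand γ w p := by
        rw [average_eq, smul_eq_mul, measureReal_restrict_apply_univ, Measure.volume_eq_prod,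
          measureReal_prod_prod, ← Measure.volume_eq_prod, div_eq_inv_mul, mul_assoc]
        gcongr
        rw [← integral_const_mul]
        exact integral_mono_ae hsq (hG.const_mul _) hbound

end Gagliardo

/-- With `dyadicIcc`, the intervals `I n` of the argument above: length `2⁻ⁿ`, left end moved
down from `x` just enough to stay inside `[0, 1]`. -/
noncomputable def dyadicLeft (x : ℝ) (n : ℕ) : ℝ := min x (1 - 2⁻¹ ^ n)

noncomputable def dyadicIcc (x : ℝ) (n : ℕ) : Set ℝ :=
  Icc (dyadicLeft x n) (dyadicLeft x n + 2⁻¹ ^ n)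

section Dyadic

variable {x : ℝ}

lemma dyadicLeft_add_eq (x : ℝ) (n : ℕ) : dyadicLeft x n + 2⁻¹ ^ n = min (x + 2⁻¹ ^ n) 1 := by
  rw [dyadicLeft, ← min_add_add_right, sub_add_cancel]

lemma dyadicIcc_subset_Icc (hx : 0 ≤ x) (n : ℕ) : dyadicIcc x n ⊆ Icc 0 1 := by
  rw [dyadicIcc, dyadicLeft_add_eq]
  refine Icc_subset_Icc (le_min hx ?_) (min_le_right _ _)
  simpa using pow_le_one₀ (by norm_num : (0:ℝ) ≤ 2⁻¹) (by norm_num) (n := n)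

lemma dyadicIcc_zero (hx : 0 ≤ x) : dyadicIcc x 0 = Icc 0 1 := by
  simp [dyadicIcc, dyadicLeft, hx]

lemma dyadicIcc_succ_subset (x : ℝ) (n : ℕ) : dyadicIcc x (n + 1) ⊆ dyadicIcc x n := by
  have h : (2⁻¹ : ℝ) ^ (n + 1) ≤ 2⁻¹ ^ n :=
    pow_le_pow_of_le_one (by norm_num) (by norm_num) n.le_succ
  rw [dyadicIcc, dyadicIcc, dyadicLeft_add_eq, dyadicLeft_add_eq, dyadicLeft, dyadicLeft]
  exact Icc_subset_Icc (min_le_min le_rfl (by linarith)) (min_le_min (by linarith) le_rfl)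

lemma volume_dyadicIcc (x : ℝ) (n : ℕ) : volume (dyadicIcc x n) = ENNReal.ofReal (2⁻¹ ^ n) := by
  rw [dyadicIcc, Real.volume_Icc, add_sub_cancel_left]

lemma measureReal_dyadicIcc (x : ℝ) (n : ℕ) : volume.real (dyadicIcc x n) = 2⁻¹ ^ n := by
  rw [measureReal_def, volume_dyadicIcc, ENNReal.toReal_ofReal (by positivity)]

lemma tendsto_two_inv_pow : Tendsto (fun n : ℕ => (2⁻¹ : ℝ) ^ n) atTop (𝓝 0) :=
  tendsto_pow_atTop_nhds_zero_of_lt_one (by norm_num) (by norm_num)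

lemma tendsto_dyadicLeft (hx : x ≤ 1) : Tendsto (dyadicLeft x) atTop (𝓝 x) := by
  have h := tendsto_const_nhds (x := x) |>.min (tendsto_two_inv_pow.const_sub 1)
  rwa [sub_zero, min_eq_left hx] at h

lemma tendsto_setAverage_dyadicIcc {w : ℝ → ℝ} (hw : ContinuousOn w (Icc 0 1))
    (hx : x ∈ Icc (0 : ℝ) 1) :
    Tendsto (fun n => ⨍ t in dyadicIcc x n, w t) atTop (𝓝 (w x)) := by
  have hattained : ∀ n, ∃ c ∈ dyadicIcc x n, w c = ⨍ t in dyadicIcc x n, w t := fun n =>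
    exists_eq_setAverage (isConnected_Icc (by simp))
      (hw.mono (dyadicIcc_subset_Icc hx.1 n))
      ((hw.mono (dyadicIcc_subset_Icc hx.1 n)).integrableOn_Icc)
      (by simp [volume_dyadicIcc]) (by simp [volume_dyadicIcc])
  choose c hc hwc using hattained
  have hc_lim : Tendsto c atTop (𝓝 x) := by
    have hright := (tendsto_dyadicLeft hx.2).add tendsto_two_inv_pow
    rw [add_zero] at hright
    exact tendsto_of_tendsto_of_tendsto_of_le_of_le (tendsto_dyadicLeft hx.2) hright
      (fun n => (hc n).1) (fun n => (hc n).2)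
  have hwc_lim : Tendsto (fun n => w (c n)) atTop (𝓝 (w x)) :=
    (hw x hx).tendsto.comp (tendsto_nhdsWithin_iff.mpr
      ⟨hc_lim, Eventually.of_forall fun n => dyadicIcc_subset_Icc hx.1 n (hc n)⟩)
  simpa only [hwc] using hwc_lim

end Dyadic

section Morrey

variable {γ : ℝ} {w : ℝ → ℝ}

lemma rpow_one_add_two_mul_eq {L : ℝ} (hL : 0 < L) (γ : ℝ) :
    L ^ (1 + 2 * γ) = L ^ 2 * (L ^ (γ - 1 / 2)) ^ 2 := by
  calc L ^ (1 + 2 * γ) = L ^ ((2 : ℝ) + (γ - 1 / 2) * 2) := by ring_nf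
    _ = L ^ 2 * (L ^ (γ - 1 / 2)) ^ 2 := by
      rw [Real.rpow_add hL, Real.rpow_mul hL.le, Real.rpow_two, Real.rpow_two]

lemma dist_setAverage_dyadicIcc_succ_le (hγ : 1 / 2 < γ) (hw : ContinuousOn w (Icc 0 1))
    (hG : IntegrableOn (gagliardoIntegrand γ w) (Icc 0 1 ×ˢ Icc 0 1)) {x : ℝ}
    (hx : x ∈ Icc (0 : ℝ) 1) (n : ℕ) :
    dist (⨍ t in dyadicIcc x n, w t) (⨍ t in dyadicIcc x (n + 1), w t) ≤
      √(2 * ∫ p in Icc 0 1 ×ˢ Icc 0 1, gagliardoIntegrand γ w p) *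
        ((2⁻¹ : ℝ) ^ (γ - 1 / 2)) ^ n := by
  set J := ∫ p in Icc 0 1 ×ˢ Icc 0 1, gagliardoIntegrand γ w p
  have hJ₀ : 0 ≤ J := setIntegral_nonneg (measurableSet_Icc.prod measurableSet_Icc)
    fun p _ => gagliardoIntegrand_nonneg p
  have hL : (0 : ℝ) < 2⁻¹ ^ n := by positivity
  have hsub : dyadicIcc x n ×ˢ dyadicIcc x (n + 1) ⊆ Icc 0 1 ×ˢ Icc 0 1 :=
    prod_mono (dyadicIcc_subset_Icc hx.1 n) (dyadicIcc_subset_Icc hx.1 (n + 1))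
  have hdist : ∀ s ∈ dyadicIcc x n, ∀ t ∈ dyadicIcc x (n + 1), |s - t| ≤ 2⁻¹ ^ n := by
    intro s hs t ht
    have ht' := dyadicIcc_succ_subset x n ht
    simp only [dyadicIcc, mem_Icc] at hs ht'
    exact abs_sub_le_iff.mpr ⟨by linarith, by linarith⟩
  have hsq := sq_setAverage_sub_setAverage_le (s := dyadicIcc x n) (t := dyadicIcc x (n + 1))
    (by linarith) measurableSet_Icc measurableSet_Icc
    (by simp [volume_dyadicIcc]) (by simp [volume_dyadicIcc])
    (by simp [volume_dyadicIcc]) (by simp [volume_dyadicIcc])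
    ((hw.mono (dyadicIcc_subset_Icc hx.1 n)).integrableOn_Icc)
    ((hw.mono (dyadicIcc_subset_Icc hx.1 (n + 1))).integrableOn_Icc)
    (hG.mono_set hsub) hdist
  rw [measureReal_dyadicIcc, measureReal_dyadicIcc] at hsq
  have hJ : ∫ p in dyadicIcc x n ×ˢ dyadicIcc x (n + 1), gagliardoIntegrand γ w p ≤ J :=
    setIntegral_mono_set hG (Eventually.of_forall gagliardoIntegrand_nonneg) hsub.eventuallyLE
  have hq : ((2⁻¹ : ℝ) ^ (γ - 1 / 2)) ^ n = (2⁻¹ ^ n) ^ (γ - 1 / 2) :=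
    Real.rpow_pow_comm (by norm_num) _ _
  rw [Real.dist_eq]
  refine abs_le_of_sq_le_sq ?_ (by positivity)
  calc _ ≤ _ := hsq
    _ ≤ (2⁻¹ ^ n) ^ (1 + 2 * γ) / (2⁻¹ ^ n * 2⁻¹ ^ (n + 1)) * J :=
        mul_le_mul_of_nonneg_left hJ (by positivity)
    _ = _ := by
      rw [hq, mul_pow, Real.sq_sqrt (by positivity), rpow_one_add_two_mul_eq hL]
      field_simp
      ring

lemma abs_sub_setAverage_Icc_le (hγ : 1 / 2 < γ) (hw : ContinuousOn w (Icc 0 1))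
    (hG : IntegrableOn (gagliardoIntegrand γ w) (Icc 0 1 ×ˢ Icc 0 1)) {x : ℝ}
    (hx : x ∈ Icc (0 : ℝ) 1) :
    |w x - ⨍ t in Icc 0 1, w t| ≤
      √(2 * ∫ p in Icc 0 1 ×ˢ Icc 0 1, gagliardoIntegrand γ w p) /
        (1 - (2⁻¹ : ℝ) ^ (γ - 1 / 2)) := by
  have hq : (2⁻¹ : ℝ) ^ (γ - 1 / 2) < 1 :=
    Real.rpow_lt_one (by norm_num) (by norm_num) (by linarith)
  have h := dist_le_of_le_geometric_of_tendsto₀ _ _ hq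
    (dist_setAverage_dyadicIcc_succ_le hγ hw hG hx) (tendsto_setAverage_dyadicIcc hw hx)
  rwa [dyadicIcc_zero hx.1, Real.dist_eq, abs_sub_comm] at h

lemma sq_sub_le_mul_integral_gagliardoIntegrand (hγ : 1 / 2 < γ) (hw : ContinuousOn w (Icc 0 1))
    (hG : IntegrableOn (gagliardoIntegrand γ w) (Ioo 0 1 ×ˢ Ioo 0 1)) {x y : ℝ}
    (hx : x ∈ Icc (0 : ℝ) 1) (hy : y ∈ Icc (0 : ℝ) 1) :
    (w x - w y) ^ 2 ≤ 8 / (1 - (2⁻¹ : ℝ) ^ (γ - 1 / 2)) ^ 2 *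
      ∫ p in Ioo 0 1 ×ˢ Ioo 0 1, gagliardoIntegrand γ w p := by
  have hae : (Ioo 0 1 ×ˢ Ioo 0 1 : Set (ℝ × ℝ)) =ᵐ[volume] Icc 0 1 ×ˢ Icc 0 1 := by
    rw [Measure.volume_eq_prod]
    exact Measure.set_prod_ae_eq Ioo_ae_eq_Icc Ioo_ae_eq_Icc
  have hG' := hG.congr_set_ae hae.symm
  rw [setIntegral_congr_set hae]
  have hJ : 0 ≤ ∫ p in Icc 0 1 ×ˢ Icc 0 1, gagliardoIntegrand γ w p :=
    setIntegral_nonneg (measurableSet_Icc.prod measurableSet_Icc) fun p _ =>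
      gagliardoIntegrand_nonneg p
  have h := (abs_sub_le _ (⨍ t in Icc 0 1, w t) _).trans (add_le_add
    (abs_sub_setAverage_Icc_le hγ hw hG' hx)
    ((abs_sub_comm _ _).le.trans (abs_sub_setAverage_Icc_le hγ hw hG' hy)))
  calc (w x - w y) ^ 2 = |w x - w y| ^ 2 := (sq_abs _).symm
    _ ≤ _ := pow_le_pow_left₀ (abs_nonneg _) h 2
    _ = _ := by
      rw [← two_mul, mul_pow, div_pow, Real.sq_sqrt (by positivity)]
      ring

end Morrey

lemma integrableOn_rpow_add_one_sub_rpow {r : ℝ} (hr : -1 < r) :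
    IntegrableOn (fun t : ℝ => t ^ r + (1 - t) ^ r) (Ioo 0 1) := by
  have h : IntervalIntegrable (fun t : ℝ => t ^ r) volume 0 1 :=
    intervalIntegral.intervalIntegrable_rpow' hr
  have h' : IntervalIntegrable (fun t : ℝ => (1 - t) ^ r) volume 0 1 := by
    simpa using (h.comp_sub_left 1).symm
  rw [← intervalIntegrable_iff_integrableOn_Ioo_of_le zero_le_one]
  exact h.add h'

theorem stmt_10_general (β γ : ℝ) (hβ : β < 1 / 2) (hγ1 : 1 / 2 < γ) :
    ∃ C : ℝ, 0 < C ∧ ∀ w : ℝ → ℝ,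
      ContinuousOn w (Set.Icc 0 1) →
      IntegrableOn (fun p : ℝ × ℝ => (w p.1 - w p.2) ^ 2 / |p.1 - p.2| ^ (1 + 2 * γ))
        (Set.Ioo 0 1 ×ˢ Set.Ioo 0 1) →
      (∫ t in Set.Ioo (0 : ℝ) 1,
          (w t - w 1) ^ 2 * (t ^ (-(2 * β)) + (1 - t) ^ (-(2 * β)))) ≤
        C * ((∫ t in Set.Ioo (0 : ℝ) 1, (w t - ∫ s in (0 : ℝ)..1, w s) ^ 2) +
          ∫ s in Set.Ioo (0 : ℝ) 1, ∫ t in Set.Ioo (0 : ℝ) 1,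
            (w s - w t) ^ 2 / |s - t| ^ (1 + 2 * γ)) := by
  set K : ℝ := 8 / (1 - (2⁻¹ : ℝ) ^ (γ - 1 / 2)) ^ 2
  set W : ℝ := ∫ t in Ioo (0 : ℝ) 1, (t ^ (-(2 * β)) + (1 - t) ^ (-(2 * β)))
  have hweight_nonneg : ∀ t ∈ Ioo (0 : ℝ) 1, 0 ≤ t ^ (-(2 * β)) + (1 - t) ^ (-(2 * β)) :=
    fun t ht => add_nonneg (Real.rpow_nonneg ht.1.le _) (Real.rpow_nonneg (sub_nonneg.2 ht.2.le) _)
  have hK : 0 ≤ K := by positivity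
  have hW : 0 ≤ W := setIntegral_nonneg measurableSet_Ioo hweight_nonneg
  refine ⟨K * W + 1, by positivity, fun w hw hG => ?_⟩
  set J := ∫ p in Ioo 0 1 ×ˢ Ioo 0 1, gagliardoIntegrand γ w p
  have hJ : 0 ≤ J := setIntegral_nonneg (measurableSet_Ioo.prod measurableSet_Ioo)
    fun p _ => gagliardoIntegrand_nonneg p
  have hL2 : 0 ≤ ∫ t in Ioo (0 : ℝ) 1, (w t - ∫ s in (0 : ℝ)..1, w s) ^ 2 :=
    setIntegral_nonneg measurableSet_Ioo fun t _ => sq_nonneg _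
  rw [← setIntegral_prod _ hG]
  calc _ ≤ ∫ t in Ioo (0 : ℝ) 1, K * J * (t ^ (-(2 * β)) + (1 - t) ^ (-(2 * β))) := by
        refine integral_mono_of_nonneg ?_
          ((integrableOn_rpow_add_one_sub_rpow (by linarith)).const_mul _) ?_
        all_goals filter_upwards [ae_restrict_mem measurableSet_Ioo] with t ht
        · exact mul_nonneg (sq_nonneg _) (hweight_nonneg t ht)
        · exact mul_le_mul_of_nonneg_right (sq_sub_le_mul_integral_gagliardoIntegrand hγ1 hw hG
            (Ioo_subset_Icc_self ht) (right_mem_Icc.2 zero_le_one)) (hweight_nonneg t ht)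
    _ = K * J * W := integral_const_mul _ _
    _ ≤ (K * W + 1) * ((∫ t in Ioo (0 : ℝ) 1, (w t - ∫ s in (0 : ℝ)..1, w s) ^ 2) + J) := by
        nlinarith [mul_nonneg (mul_nonneg hK hW) hL2]

/-- Weighted Hardy-type endpoint inequality from the proof of the paper's Lemma 4.1:
for `0 ≤ β < 1/2 < γ < 1` and `w` continuous on `[0,1]` with finite Gagliardo `H^γ(0,1)`
seminorm, with `w̄ = ∫_0^1 w`,
`∫_0^1 (w t - w 1)² (t^(-2β) + (1-t)^(-2β)) dt
  ≤ C (‖w - w̄‖²_{L²(0,1)} + ∫_0^1 ∫_0^1 |w s - w t|²/|s-t|^(1+2γ) ds dt)`,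
where `C` depends only on `β` and `γ`. -/
theorem stmt_10 (β γ : ℝ) (hβ0 : 0 ≤ β) (hβ : β < 1 / 2) (hγ1 : 1 / 2 < γ) (hγ2 : γ < 1) :
    ∃ C : ℝ, 0 < C ∧ ∀ w : ℝ → ℝ,
      ContinuousOn w (Set.Icc 0 1) →
      IntegrableOn (fun p : ℝ × ℝ => (w p.1 - w p.2) ^ 2 / |p.1 - p.2| ^ (1 + 2 * γ))
        (Set.Ioo 0 1 ×ˢ Set.Ioo 0 1) →
      (∫ t in Set.Ioo (0 : ℝ) 1,
          (w t - w 1) ^ 2 * (t ^ (-(2 * β)) + (1 - t) ^ (-(2 * β)))) ≤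
        C * ((∫ t in Set.Ioo (0 : ℝ) 1, (w t - ∫ s in (0 : ℝ)..1, w s) ^ 2) +
          ∫ s in Set.Ioo (0 : ℝ) 1, ∫ t in Set.Ioo (0 : ℝ) 1,
            (w s - w t) ^ 2 / |s - t| ^ (1 + 2 * γ)) :=
  stmt_10_general β γ hβ hγ1
end
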